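/- Let V be a finite-dimensional real vector space with a Minkowski norm Φ, let I ⊆ ℝ be an open interval, and let β : I → V be a C^∞ curve with Φ(β'(t)) = 1 for all t ∈ I. Fix t₀ ∈ I. Then there exist δ > 0 with (t₀−δ, t₀+δ) ⊆ I, an open neighborhood W of β(t₀) in V, and a C^∞ function h : W → ℝ with values in (t₀−δ, t₀+δ) such that h(β(t)) = t for every t ∈ (t₀−δ, t₀+δ) with β(t) ∈ W, and for every x ∈ W the value h(x) is the unique t ∈ (t₀−δ, t₀+δ) satisfying L_Φ(β'(t))(x − β(t)) = 0. -/

import Mathlib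

open Set

noncomputable section

/-- A Minkowski norm on a real vector space: a norm whose square is `C^∞` away from the
origin with positive definite second derivative at every nonzero point. -/
structure IsMinkowskiNorm {V : Type*} [NormedAddCommGroup V] [NormedSpace ℝ V]
    (Φ : V → ℝ) : Prop where
  nonneg : ∀ v, 0 ≤ Φ v
  eq_zero_iff : ∀ v, Φ v = 0 ↔ v = 0
  smul : ∀ (c : ℝ) (v : V), Φ (c • v) = |c| * Φ v
  add_le : ∀ v w, Φ (v + w) ≤ Φ v + Φ w
  smooth : ContDiffOn ℝ (⊤ : ℕ∞) (fun v => (Φ v) ^ 2) {(0 : V)}ᶜ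
  posdef : ∀ v : V, v ≠ 0 → ∀ w : V, w ≠ 0 →
    0 < iteratedFDeriv ℝ 2 (fun v => (Φ v) ^ 2) v ![w, w]

/-- The Legendre transform of a norm `Φ`: `L_Φ(v) = ½ D(Φ²)(v)`. -/
def legendre {V : Type*} [NormedAddCommGroup V] [NormedSpace ℝ V]
    (Φ : V → ℝ) (v : V) : V →L[ℝ] ℝ :=
  (1 / 2 : ℝ) • fderiv ℝ (fun w => (Φ w) ^ 2) v

/-! At `(β t₀, t₀)` the `t`-derivative of `F (x, t) = L_Φ(β'(t))(x - β(t))` is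
`-L_Φ(β'(t₀))(β'(t₀)) = -Φ(β'(t₀))² = -1`, by Euler's identity for the `2`-homogeneous `Φ²`,
so the implicit function theorem solves `F = 0` for `t` near `t₀`. The implicit function theorem
only gives smoothness of the solution at the base point; smoothness on a whole neighbourhood
follows by applying it again at every point of the graph, where local uniqueness identifies the
new local solution with the old one. -/

section ImplicitFunction

variable {𝕜 : Type*} [RCLike 𝕜]
  {E₁ : Type*} [NormedAddCommGroup E₁] [NormedSpace 𝕜 E₁] [CompleteSpace E₁]
  {E₂ : Type*} [NormedAddCommGroup E₂] [NormedSpace 𝕜 E₂] [CompleteSpace E₂]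
  {F : Type*} [NormedAddCommGroup F] [NormedSpace 𝕜 F] [CompleteSpace F]
  {f : E₁ × E₂ → F} {n : WithTop ℕ∞}

theorem contDiffAt_of_levelSet_eq_graph {ψ : E₁ → E₂} {s : Set E₁} {J : Set E₂} {c : F}
    {x : E₁} (hs : IsOpen s) (hJ : IsOpen J)
    (hgraph : ∀ x ∈ s, ∀ y ∈ J, f (x, y) = c ↔ ψ x = y) (hx : x ∈ s) (hψx : ψ x ∈ J)
    (hf : ContDiffAt 𝕜 n f (x, ψ x)) (hn : n ≠ 0)
    (hinv : (fderiv 𝕜 f (x, ψ x) ∘L .inr 𝕜 E₁ E₂).IsInvertible) :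
    ContDiffAt 𝕜 n ψ x := by
  have hφ : ContDiffAt 𝕜 n (hf.implicitFunction hn hinv) x :=
    hf.contDiffAt_implicitFunction hn hinv
  have hφx : hf.implicitFunction hn hinv x = ψ x := hf.implicitFunction_apply_self hn hinv
  have hc : f (x, ψ x) = c := (hgraph x hx _ hψx).2 rfl
  refine hφ.congr_of_eventuallyEq ?_
  filter_upwards [hf.eventually_apply_implicitFunction hn hinv, hs.mem_nhds hx,
    hφ.continuousAt.preimage_mem_nhds (hJ.mem_nhds (hφx.symm ▸ hψx))] with x' hx' hs' hJ'
  exact (hgraph x' hs' _ hJ').1 (hx'.trans hc)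

theorem exists_contDiffOn_implicitFunction {U : Set (E₁ × E₂)} {x₀ : E₁} {y₀ : E₂}
    (hU : IsOpen U) (h₀ : (x₀, y₀) ∈ U) (hf : ContDiffOn 𝕜 n f U) (hn : n ≠ 0)
    (hinv : (fderiv 𝕜 f (x₀, y₀) ∘L .inr 𝕜 E₁ E₂).IsInvertible) :
    ∃ δ > 0, ∃ W : Set E₁, IsOpen W ∧ x₀ ∈ W ∧ W ×ˢ Metric.ball y₀ δ ⊆ U ∧
      ∃ ψ : E₁ → E₂, ContDiffOn 𝕜 n ψ W ∧ MapsTo ψ W (Metric.ball y₀ δ) ∧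
        ∀ x ∈ W, ∀ y ∈ Metric.ball y₀ δ, f (x, y) = f (x₀, y₀) ↔ ψ x = y := by
  have hf₀ : ContDiffAt 𝕜 n f (x₀, y₀) := hf.contDiffAt (hU.mem_nhds h₀)
  set ψ := hf₀.implicitFunction hn hinv
  have hinv_open : IsOpen (U ∩ {p | (fderiv 𝕜 f p ∘L .inr 𝕜 E₁ E₂).IsInvertible}) :=
    ((hf.continuousOn_fderiv_of_isOpen hU (ENat.one_le_iff_ne_zero_withTop.2 hn)).clm_comp
      continuousOn_const).isOpen_inter_preimage hU ContinuousLinearEquiv.isOpen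
  obtain ⟨δ, hδ, hball⟩ := Metric.mem_nhds_iff.1 <|
    Filter.inter_mem (hinv_open.mem_nhds ⟨h₀, hinv⟩)
      (hf₀.eventually_apply_eq_iff_implicitFunction hn hinv)
  rw [← ball_prod_same] at hball
  have hgraph : ∀ x ∈ Metric.ball x₀ δ, ∀ y ∈ Metric.ball y₀ δ,
      f (x, y) = f (x₀, y₀) ↔ ψ x = y := fun x hx y hy => (hball ⟨hx, hy⟩).2
  set W := Metric.ball x₀ δ ∩ ψ ⁻¹' Metric.ball y₀ δ
  have hψ : ∀ x ∈ W, ContDiffAt 𝕜 n ψ x := fun x hx =>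
    contDiffAt_of_levelSet_eq_graph Metric.isOpen_ball Metric.isOpen_ball hgraph hx.1 hx.2
      (hf.contDiffAt (hU.mem_nhds (hball hx).1.1)) hn (hball hx).1.2
  have hW : IsOpen W := isOpen_iff_mem_nhds.2 fun x hx =>
    Filter.inter_mem (Metric.isOpen_ball.mem_nhds hx.1)
      ((hψ x hx).continuousAt.preimage_mem_nhds (Metric.isOpen_ball.mem_nhds hx.2))
  have hψ₀ : ψ x₀ = y₀ := hf₀.implicitFunction_apply_self hn hinv
  refine ⟨δ, hδ, W, hW, ⟨Metric.mem_ball_self hδ, by simpa [hψ₀] using hδ⟩,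
    fun p hp => (hball ⟨hp.1.1, hp.2⟩).1.1, ψ, fun x hx => (hψ x hx).contDiffWithinAt,
    fun x hx => hx.2, fun x hx => hgraph x hx.1⟩

end ImplicitFunction

theorem fderiv_apply_self_of_smul_eq_sq_mul {E : Type*} [NormedAddCommGroup E] [NormedSpace ℝ E]
    {g : E → ℝ} {v : E} (hg : DifferentiableAt ℝ g v) (hhom : ∀ c : ℝ, g (c • v) = c ^ 2 * g v) :
    fderiv ℝ g v v = 2 * g v := by
  have hline : HasDerivAt (fun c : ℝ => g (c • v)) (fderiv ℝ g v v) 1 := by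
    have hsmul : HasDerivAt (fun c : ℝ => c • v) v 1 := by
      simpa using (hasDerivAt_id (1 : ℝ)).smul_const v
    exact hg.hasFDerivAt.comp_hasDerivAt_of_eq 1 hsmul (one_smul ℝ v).symm
  have hquad : HasDerivAt (fun c : ℝ => c ^ 2 * g v) (2 * g v) 1 := by
    simpa using (hasDerivAt_pow 2 (1 : ℝ)).mul_const (g v)
  exact hline.unique (funext hhom ▸ hquad)

theorem isInvertible_fderiv_comp_inr_of_hasDerivAt {𝕜 : Type*} [NontriviallyNormedField 𝕜]
    {E : Type*} [NormedAddCommGroup E] [NormedSpace 𝕜 E] {g : E × 𝕜 → 𝕜} {x : E} {t c : 𝕜}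
    (hg : DifferentiableAt 𝕜 g (x, t)) (hc : HasDerivAt (fun s => g (x, s)) c t) (hc₀ : c ≠ 0) :
    (fderiv 𝕜 g (x, t) ∘L .inr 𝕜 E 𝕜).IsInvertible := by
  have hpartial : fderiv 𝕜 g (x, t) ∘L .inr 𝕜 E 𝕜 = ContinuousLinearMap.toSpanSingleton 𝕜 c :=
    (hg.hasFDerivAt.comp t (hasFDerivAt_prodMk_right x t)).unique hc.hasFDerivAt
  rw [hpartial]
  exact .of_inverse (g := ContinuousLinearMap.toSpanSingleton 𝕜 c⁻¹)
    (by ext; simp [hc₀]) (by ext; simp [hc₀])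

namespace IsMinkowskiNorm

variable {V : Type*} [NormedAddCommGroup V] [NormedSpace ℝ V] {Φ : V → ℝ}

theorem contDiffOn_legendre (hΦ : IsMinkowskiNorm Φ) :
    ContDiffOn ℝ (⊤ : ℕ∞) (legendre Φ) {0}ᶜ :=
  (hΦ.smooth.fderiv_of_isOpen isOpen_compl_singleton le_rfl).const_smul (1 / 2 : ℝ)

theorem legendre_apply_self (hΦ : IsMinkowskiNorm Φ) (v : V) : legendre Φ v v = Φ v ^ 2 := by
  rcases eq_or_ne v 0 with rfl | hv
  · simp [(hΦ.eq_zero_iff 0).2 rfl]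
  have hdiff : DifferentiableAt ℝ (fun w => Φ w ^ 2) v :=
    (hΦ.smooth.contDiffAt (isOpen_compl_singleton.mem_nhds hv)).differentiableAt (by simp)
  have := fderiv_apply_self_of_smul_eq_sq_mul hdiff fun c => by rw [hΦ.smul, mul_pow, sq_abs]
  simp only [legendre, smul_apply, this, smul_eq_mul]
  ring

end IsMinkowskiNorm

section Calibrator

variable {V : Type*} [NormedAddCommGroup V] [NormedSpace ℝ V] {Φ : V → ℝ} {β : ℝ → V}

def calibratorEquation (Φ : V → ℝ) (β : ℝ → V) (p : V × ℝ) : ℝ :=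
  legendre Φ (deriv β p.2) (p.1 - β p.2)

theorem calibratorEquation_apply_curve (t : ℝ) : calibratorEquation Φ β (β t, t) = 0 := by
  simp [calibratorEquation]

theorem contDiffOn_calibratorEquation (hΦ : IsMinkowskiNorm Φ) {I : Set ℝ} (hI : IsOpen I)
    (hβ : ContDiffOn ℝ (⊤ : ℕ∞) β I) (hβ' : ∀ t ∈ I, deriv β t ≠ 0) :
    ContDiffOn ℝ (⊤ : ℕ∞) (calibratorEquation Φ β) (univ ×ˢ I) := by
  have hβ_snd : ContDiffOn ℝ (⊤ : ℕ∞) (fun p : V × ℝ => β p.2) (univ ×ˢ I) :=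
    hβ.comp contDiff_snd.contDiffOn fun p hp => hp.2
  have hL : ContDiffOn ℝ (⊤ : ℕ∞) (fun p : V × ℝ => legendre Φ (deriv β p.2)) (univ ×ˢ I) :=
    hΦ.contDiffOn_legendre.comp ((hβ.deriv_of_isOpen hI le_rfl).comp contDiff_snd.contDiffOn
      fun p hp => hp.2) fun p hp => hβ' p.2 hp.2
  exact hL.clm_apply (contDiff_fst.contDiffOn.sub hβ_snd)

theorem hasDerivAt_calibratorEquation_curve (hΦ : IsMinkowskiNorm Φ) {t₀ : ℝ}
    (hβ : DifferentiableAt ℝ β t₀) (hβ' : DifferentiableAt ℝ (deriv β) t₀)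
    (hβ'₀ : deriv β t₀ ≠ 0) :
    HasDerivAt (fun t => calibratorEquation Φ β (β t₀, t)) (-Φ (deriv β t₀) ^ 2) t₀ := by
  have hL : DifferentiableAt ℝ (legendre Φ) (deriv β t₀) :=
    (hΦ.contDiffOn_legendre.contDiffAt (isOpen_compl_singleton.mem_nhds hβ'₀)).differentiableAt
      (by simp)
  have hdisp : HasDerivAt (fun t => β t₀ - β t) (-deriv β t₀) t₀ :=
    ((hasDerivAt_const t₀ (β t₀)).sub hβ.hasDerivAt).congr_deriv (zero_sub _)
  exact ((hL.comp t₀ hβ').hasDerivAt.clm_apply hdisp).congr_deriv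
    (by simp [hΦ.legendre_apply_self])

end Calibrator

theorem implicit_calibrator_exists_general
    {V : Type*} [NormedAddCommGroup V] [NormedSpace ℝ V] [FiniteDimensional ℝ V]
    (Φ : V → ℝ) (hΦ : IsMinkowskiNorm Φ)
    (I : Set ℝ) (hIopen : IsOpen I)
    (β : ℝ → V) (hβ : ContDiffOn ℝ (⊤ : ℕ∞) β I)
    (hunit : ∀ t ∈ I, Φ (deriv β t) = 1)
    (t₀ : ℝ) (ht₀ : t₀ ∈ I) :
    ∃ δ : ℝ, 0 < δ ∧ Ioo (t₀ - δ) (t₀ + δ) ⊆ I ∧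
      ∃ W : Set V, IsOpen W ∧ β t₀ ∈ W ∧
        ∃ h : V → ℝ, ContDiffOn ℝ (⊤ : ℕ∞) h W ∧
          MapsTo h W (Ioo (t₀ - δ) (t₀ + δ)) ∧
          (∀ t ∈ Ioo (t₀ - δ) (t₀ + δ), β t ∈ W → h (β t) = t) ∧
          ∀ x ∈ W,
            legendre Φ (deriv β (h x)) (x - β (h x)) = 0 ∧
            ∀ t ∈ Ioo (t₀ - δ) (t₀ + δ),
              legendre Φ (deriv β t) (x - β t) = 0 → t = h x := by
  have hβ' : ∀ t ∈ I, deriv β t ≠ 0 := fun t ht =>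
    ne_of_apply_ne Φ (by rw [hunit t ht, (hΦ.eq_zero_iff 0).2 rfl]; exact one_ne_zero)
  have hsmooth : ((⊤ : ℕ∞) : WithTop ℕ∞) ≠ 0 := by simp
  have hU : IsOpen (univ ×ˢ I : Set (V × ℝ)) := isOpen_univ.prod hIopen
  have hF := contDiffOn_calibratorEquation hΦ hIopen hβ hβ'
  have hinv : (fderiv ℝ (calibratorEquation Φ β) (β t₀, t₀) ∘L .inr ℝ V ℝ).IsInvertible :=
    isInvertible_fderiv_comp_inr_of_hasDerivAt
      ((hF.contDiffAt (hU.mem_nhds ⟨mem_univ _, ht₀⟩)).differentiableAt hsmooth)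
      (hasDerivAt_calibratorEquation_curve hΦ
        ((hβ.contDiffAt (hIopen.mem_nhds ht₀)).differentiableAt hsmooth)
        (((hβ.deriv_of_isOpen hIopen le_rfl).contDiffAt (hIopen.mem_nhds ht₀)).differentiableAt
          hsmooth) (hβ' t₀ ht₀))
      (by simp [hunit t₀ ht₀])
  obtain ⟨δ, hδ, W, hW, hβt₀, hWU, h, hh, hmaps, hgraph⟩ :=
    exists_contDiffOn_implicitFunction hU ⟨mem_univ _, ht₀⟩ hF hsmooth hinv
  simp only [calibratorEquation_apply_curve, Real.ball_eq_Ioo] at hWU hmaps hgraph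
  refine ⟨δ, hδ, fun t ht => (hWU (mk_mem_prod hβt₀ ht)).2, W, hW, hβt₀, h, hh, hmaps,
    fun t ht hβt => (hgraph _ hβt t ht).1 (calibratorEquation_apply_curve t),
    fun x hx => ⟨(hgraph x hx _ (hmaps hx)).2 rfl,
      fun t ht ht' => ((hgraph x hx t ht).1 ht').symm⟩⟩

/-- **Implicit definition of the calibrator.** Let `β : I → V` be a unit-speed `C^∞`
curve in a finite-dimensional space with a Minkowski norm `Φ`, and `t₀ ∈ I`. Then near
`β(t₀)` there is a `C^∞` function `h`, with `h(β(t)) = t`, such that `h(x)` is the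
unique parameter `t` near `t₀` satisfying `L_Φ(β'(t))(x − β(t)) = 0`. -/
theorem implicit_calibrator_exists
    {V : Type*} [NormedAddCommGroup V] [NormedSpace ℝ V] [FiniteDimensional ℝ V]
    (Φ : V → ℝ) (hΦ : IsMinkowskiNorm Φ)
    (I : Set ℝ) (hIopen : IsOpen I) (hIconn : I.OrdConnected)
    (β : ℝ → V) (hβ : ContDiffOn ℝ (⊤ : ℕ∞) β I)
    (hunit : ∀ t ∈ I, Φ (deriv β t) = 1)
    (t₀ : ℝ) (ht₀ : t₀ ∈ I) :
    ∃ δ : ℝ, 0 < δ ∧ Ioo (t₀ - δ) (t₀ + δ) ⊆ I ∧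
      ∃ W : Set V, IsOpen W ∧ β t₀ ∈ W ∧
        ∃ h : V → ℝ, ContDiffOn ℝ (⊤ : ℕ∞) h W ∧
          MapsTo h W (Ioo (t₀ - δ) (t₀ + δ)) ∧
          (∀ t ∈ Ioo (t₀ - δ) (t₀ + δ), β t ∈ W → h (β t) = t) ∧
          ∀ x ∈ W,
            legendre Φ (deriv β (h x)) (x - β (h x)) = 0 ∧
            ∀ t ∈ Ioo (t₀ - δ) (t₀ + δ),
              legendre Φ (deriv β t) (x - β t) = 0 → t = h x :=
  implicit_calibrator_exists_general Φ hΦ I hIopen β hβ hunit t₀ ht₀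

end
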